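/- arXiv:1101.3677 — 2 statements merged into one kernel-verified Lean document; each statement's English description precedes it below -/
import Mathlib

section
/- Let φ : 𝔹_N → 𝔹_N be holomorphic. Suppose that for every Orlicz function ψ and every A > 0 there exists h₀ ∈ (0,1) such that σ_N({η ∈ 𝕊_N : |1 − ⟨φ(rη), ζ⟩| < h}) ≤ 1/ψ(A·ψ⁻¹(1/h^N)) for all 0 < h < h₀, all 0 < r < 1 and all ζ ∈ 𝕊_N. Then sup_{z ∈ 𝔹_N} |φ(z)| < 1. -/
open Set Filter

/-- An Orlicz function: a strictly convex function `psi : [0,oo) -> [0,oo)` with `psi 0 = 0`,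
`psi` continuous at `0`, and `psi x / x -> oo` as `x -> oo`. -/
def OrliczFunction (ψ : ℝ → ℝ) : Prop :=
  StrictConvexOn ℝ (Ici 0) ψ ∧ (∀ x ∈ Ici (0:ℝ), 0 ≤ ψ x) ∧ ψ 0 = 0 ∧
    ContinuousWithinAt ψ (Ici 0) 0 ∧ Tendsto (fun x => ψ x / x) atTop atTop

/-- `ψinv` is the inverse of the Orlicz function `ψ`, viewed as an increasing bijection
of `[0,oo)` onto itself. -/
def OrliczInverse (ψ ψinv : ℝ → ℝ) : Prop :=
  (∀ x, 0 ≤ x → ψinv (ψ x) = x) ∧ (∀ y, 0 ≤ y → ψ (ψinv y) = y) ∧ (∀ y, 0 ≤ y → 0 ≤ ψinv y)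

/-- The nabla_0-condition. -/
def Nabla0 (ψ : ℝ → ℝ) : Prop :=
  ∀ B > (1:ℝ), ∃ C ≥ (1:ℝ), ∃ x₀ > (0:ℝ), ∀ x y : ℝ, x₀ ≤ x → x ≤ y →
    ψ (B * x) / ψ x ≤ ψ (C * B * y) / ψ y

/-- The uniform nabla_0-condition. -/
def UniformNabla0 (ψ : ℝ → ℝ) : Prop :=
  ∃ C ≥ (1:ℝ), ∀ B > (1:ℝ), ∃ x₀ > (0:ℝ), ∀ x y : ℝ, x₀ ≤ x → x ≤ y →
    ψ (B * x) / ψ x ≤ ψ (C * B * y) / ψ y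

/-- The nabla_2-condition. -/
def Nabla2 (ψ : ℝ → ℝ) : Prop :=
  ∃ β > (1:ℝ), ∃ x₀ > (0:ℝ), ∀ x ≥ x₀, 2 * β * ψ x ≤ ψ (β * x)

/-- The Delta_2-condition. -/
def Delta2 (ψ : ℝ → ℝ) : Prop :=
  ∃ K > (1:ℝ), ∃ x₀ > (0:ℝ), ∀ x ≥ x₀, ψ (2 * x) ≤ K * ψ x

/-- The Delta^2-condition. -/
def DeltaSquare (ψ : ℝ → ℝ) : Prop :=
  ∃ C > (0:ℝ), ∃ x₀ > (0:ℝ), ∀ x ≥ x₀, (ψ x) ^ 2 ≤ ψ (C * x)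

open MeasureTheory Set Filter Metric

/-- The non-isotropic ball `S(ζ,h) = {z ∈ B_N : |1 − ⟨z,ζ⟩| < h}`, where
`⟨z,ζ⟩ = Σ zᵢ conj ζᵢ` is the Hermitian inner product (i.e. `⟪ζ, z⟫` in Mathlib's
convention). -/
def nonisotropicBall (N : ℕ) (ζ : EuclideanSpace ℂ (Fin N)) (h : ℝ) :
    Set (EuclideanSpace ℂ (Fin N)) :=
  {z | ‖z‖ < 1 ∧ ‖1 - (inner ℂ ζ z : ℂ)‖ < h}

/-- The weighted measure `(1−|z|²)^α dv` on the unit ball of `ℂ^N`. -/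
noncomputable def wBergman (N : ℕ) [MeasurableSpace (EuclideanSpace ℂ (Fin N))]
    [BorelSpace (EuclideanSpace ℂ (Fin N))] (α : ℝ) :
    Measure (EuclideanSpace ℂ (Fin N)) :=
  (volume.restrict (Metric.ball 0 1)).withDensity
    fun z => ENNReal.ofReal ((1 - ‖z‖ ^ 2) ^ α)

/-- The normalized weighted measure `v_α = c_α (1−|z|²)^α dv` on the unit ball of `ℂ^N`,
with `c_α` chosen so that `v_α(B_N) = 1`. -/
noncomputable def vBergman (N : ℕ) [MeasurableSpace (EuclideanSpace ℂ (Fin N))]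
    [BorelSpace (EuclideanSpace ℂ (Fin N))] (α : ℝ) :
    Measure (EuclideanSpace ℂ (Fin N)) :=
  (wBergman N α Set.univ)⁻¹ • wBergman N α

open Topology

/-!
If `sup ‖φ‖ = 1`, pick `zₙ` with `εₙ = 1 - ‖φ zₙ‖ → 0`. Schwarz's lemma on the ball of radius
`1 - ‖zₙ‖` about `zₙ` shows that for `η` in the ball of radius `εₙ (1 - ‖zₙ‖) / 2` about
`zₙ / ‖zₙ‖`, the point `φ (‖zₙ‖ η)` lies in the non-isotropic ball of radius `2 εₙ` about
`φ zₙ / ‖φ zₙ‖`; by unitary invariance that set of `η` has positive mass `mₙ`. So the hypothesis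
would give `mₙ ≤ 1 / ψ (2 ψ⁻¹ ((2 εₙ)^(-N)))` for every Orlicz function `ψ`. One Orlicz function
`ψ x = x² + ∑ⱼ cⱼ (x - (j + 1))⁺` defeats this: choose `nₖ ≥ k` with `(2 εₙₖ)^(-N) ≥ ψ (k + 1)`,
so that `ψ⁻¹ ((2 εₙₖ)^(-N)) ≥ k + 1`, and then the slope `cₖ` so large that
`ψ (2 (k + 1)) ≥ 2 / mₙₖ`.
-/

noncomputable section

theorem OrliczFunction.strictMonoOn {ψ : ℝ → ℝ} (hψ : OrliczFunction ψ) :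
    StrictMonoOn ψ (Ici 0) := by
  obtain ⟨hconv, hnonneg, hzero, -, -⟩ := hψ
  intro x (hx : 0 ≤ x) y (hy : 0 ≤ y) hxy
  have hy0 : 0 < y := hx.trans_lt hxy
  have hψy : 0 < ψ y := by
    have h := hconv.2 (mem_Ici.2 le_rfl) (mem_Ici.2 hy) hy0.ne (show (0 : ℝ) < 1 / 2 by norm_num)
      (show (0 : ℝ) < 1 / 2 by norm_num) (by norm_num)
    have := hnonneg ((1 / 2 : ℝ) • 0 + (1 / 2 : ℝ) • y) (by simp [hy])
    simp only [smul_eq_mul, hzero] at h this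
    linarith
  rcases hx.eq_or_lt with rfl | hx0
  · rwa [hzero]
  -- `x` is a proper convex combination of `0` and `y`
  have h := hconv.2 (mem_Ici.2 le_rfl) (mem_Ici.2 hy) hy0.ne
    (show 0 < 1 - x / y by rw [sub_pos, div_lt_one hy0]; exact hxy)
    (show 0 < x / y by positivity) (by ring)
  have hxy' : (1 - x / y) • (0 : ℝ) + (x / y) • y = x := by
    rw [smul_zero, zero_add, smul_eq_mul, div_mul_cancel₀ _ hy0.ne']
  rw [hxy', smul_eq_mul, smul_eq_mul, hzero, mul_zero, zero_add] at h
  calc ψ x < x / y * ψ y := h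
    _ ≤ ψ y := mul_le_of_le_one_left hψy.le ((div_le_one hy0).2 hxy.le)

theorem OrliczInverse.le_of_apply_le {ψ ψinv : ℝ → ℝ} (hinv : OrliczInverse ψ ψinv)
    (hψ : OrliczFunction ψ) {a y : ℝ} (ha : 0 ≤ a) (h : ψ a ≤ y) : a ≤ ψinv y := by
  have hy : 0 ≤ y := (hψ.2.1 a ha).trans h
  by_contra! hlt
  have := hψ.strictMonoOn (mem_Ici.2 (hinv.2.2 y hy)) (mem_Ici.2 ha) hlt
  rw [hinv.2.1 y hy] at this
  linarith

def rampSum (c : ℕ → ℝ) (x : ℝ) : ℝ := ∑' j : ℕ, c j * max (x - (j + 1)) 0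

theorem rampSum_eq_sum_range (c : ℕ → ℝ) {K : ℕ} {x : ℝ} (hx : x ≤ K + 1) :
    rampSum c x = ∑ j ∈ Finset.range K, c j * max (x - (j + 1)) 0 := by
  refine tsum_eq_sum fun j hj => ?_
  have hKj : (K : ℝ) ≤ j := by exact_mod_cast not_lt.1 (Finset.mem_range.not.1 hj)
  rw [max_eq_right (by linarith), mul_zero]

theorem rampSum_zero (c : ℕ → ℝ) : rampSum c 0 = 0 := by
  simp [rampSum_eq_sum_range c (K := 0) (x := 0) (by norm_num)]

theorem exists_le_natCast_add_one (x y : ℝ) : ∃ K : ℕ, x ≤ K + 1 ∧ y ≤ K + 1 := by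
  obtain ⟨K, hK⟩ := exists_nat_ge (max x y)
  exact ⟨K, by linarith [le_max_left x y], by linarith [le_max_right x y]⟩

def orliczOf (c : ℕ → ℝ) (x : ℝ) : ℝ := x ^ 2 + rampSum c x

def orliczInvOf (c : ℕ → ℝ) : ℝ → ℝ := Function.invFunOn (orliczOf c) (Ici 0)

section NonnegCoeff

variable {c : ℕ → ℝ} (hc : ∀ j, 0 ≤ c j)
include hc

theorem rampSum_nonneg (x : ℝ) : 0 ≤ rampSum c x :=
  tsum_nonneg fun j => mul_nonneg (hc j) (le_max_right _ _)

theorem convexOn_rampSum : ConvexOn ℝ univ (rampSum c) := by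
  have hramp : ∀ j : ℕ, ConvexOn ℝ univ fun x : ℝ => c j • max (x - (j + 1)) 0 := fun j =>
    (((convexOn_id convex_univ).sub (concaveOn_const _ convex_univ)).sup
      (convexOn_const 0 convex_univ)).smul (hc j)
  refine ⟨convex_univ, fun x _ y _ a b ha hb hab => ?_⟩
  obtain ⟨K, hxK, hyK⟩ := exists_le_natCast_add_one x y
  have hzK : a • x + b • y ≤ K + 1 := convex_Iic ((K : ℝ) + 1) hxK hyK ha hb hab
  rw [rampSum_eq_sum_range c hxK, rampSum_eq_sum_range c hyK, rampSum_eq_sum_range c hzK,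
    Finset.smul_sum, Finset.smul_sum, ← Finset.sum_add_distrib]
  exact Finset.sum_le_sum fun j _ => (hramp j).2 trivial trivial ha hb hab

theorem continuous_orliczOf : Continuous (orliczOf c) :=
  (continuous_pow 2).add (continuousOn_univ.1 ((convexOn_rampSum hc).continuousOn isOpen_univ))

theorem orliczFunction_orliczOf : OrliczFunction (orliczOf c) := by
  have hsq : StrictConvexOn ℝ (Ici 0) fun x : ℝ => x ^ 2 :=
    (Even.strictConvexOn_pow even_two two_ne_zero).subset (subset_univ _) (convex_Ici 0)
  refine ⟨hsq.add_convexOn ((convexOn_rampSum hc).subset (subset_univ _) (convex_Ici 0)),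
    fun x _ => add_nonneg (sq_nonneg x) (rampSum_nonneg hc x), by simp [orliczOf, rampSum_zero],
    (continuous_orliczOf hc).continuousWithinAt, ?_⟩
  refine tendsto_atTop_mono' _ ?_ tendsto_id
  filter_upwards [eventually_gt_atTop (0 : ℝ)] with x hx
  rw [id, le_div_iff₀ hx, orliczOf]
  nlinarith [rampSum_nonneg hc x]

theorem orliczInverse_orliczInvOf : OrliczInverse (orliczOf c) (orliczInvOf c) := by
  have hsurj : ∀ y, 0 ≤ y → ∃ x ∈ Ici (0 : ℝ), orliczOf c x = y := fun y hy => by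
    have hb : y ≤ orliczOf c (max 1 y) := by
      rw [orliczOf]
      nlinarith [le_max_left 1 y, le_max_right 1 y, rampSum_nonneg hc (max 1 y)]
    obtain ⟨x, hx, hxy⟩ := intermediate_value_Icc (zero_le_one.trans (le_max_left 1 y))
      (continuous_orliczOf hc).continuousOn
      (show y ∈ Icc (orliczOf c 0) _ by simpa [orliczOf, rampSum_zero] using ⟨hy, hb⟩)
    exact ⟨x, hx.1, hxy⟩
  refine ⟨fun x hx => ?_, fun y hy => Function.invFunOn_eq (hsurj y hy),
    fun y hy => Function.invFunOn_mem (hsurj y hy)⟩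
  exact (orliczFunction_orliczOf hc).strictMonoOn.injOn.leftInvOn_invFunOn hx

theorem orliczOf_natCast_add_one_le (k : ℕ) :
    orliczOf c (k + 1) ≤ (k + 1) ^ 2 + (k + 1) * ∑ j ∈ Finset.range k, c j := by
  rw [orliczOf, rampSum_eq_sum_range c le_rfl, Finset.mul_sum]
  refine add_le_add le_rfl (Finset.sum_le_sum fun j _ => ?_)
  rw [mul_comm _ (c j)]
  exact mul_le_mul_of_nonneg_left (max_le (by linarith [j.cast_nonneg (α := ℝ)]) (by positivity))
    (hc j)

theorem mul_natCast_add_one_le_orliczOf (k : ℕ) :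
    c k * (k + 1) ≤ orliczOf c (2 * (k + 1)) := by
  have hK : 2 * ((k : ℝ) + 1) ≤ ((2 * k + 1 : ℕ) : ℝ) + 1 := by push_cast; linarith
  have hterm : c k * max (2 * ((k : ℝ) + 1) - (k + 1)) 0 = c k * (k + 1) := by
    rw [max_eq_left (by linarith [k.cast_nonneg (α := ℝ)])]; ring
  rw [orliczOf, rampSum_eq_sum_range c hK, ← hterm]
  refine le_add_of_nonneg_of_le (sq_nonneg _) ?_
  exact Finset.single_le_sum (f := fun j => c j * max (2 * ((k : ℝ) + 1) - (j + 1)) 0)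
    (fun j _ => mul_nonneg (hc j) (le_max_right _ _)) (Finset.mem_range.2 (by omega))

end NonnegCoeff

theorem exists_orliczFunction_frequently_le (y T : ℕ → ℝ) (hy : Tendsto y atTop atTop) :
    ∃ ψ ψinv : ℝ → ℝ, OrliczFunction ψ ∧ OrliczInverse ψ ψinv ∧
      ∃ᶠ n in atTop, T n ≤ ψ (2 * ψinv (y n)) := by
  have hpick : ∀ (k : ℕ) (s : ℝ), ∃ n, k ≤ n ∧ ((k : ℝ) + 1) ^ 2 + (k + 1) * s ≤ y n :=
    fun k s => ((eventually_ge_atTop k).and (hy.eventually_ge_atTop _)).exists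
  choose pick hpick_ge hpick_le using hpick
  -- The slope `c k` added at `k + 1` depends only on the partial sum `S k` of the earlier ones,
  -- which already determines `ψ (k + 1)`.
  let S : ℕ → ℝ := fun k => Nat.rec 0 (fun k s => s + max (T (pick k s)) 0 / (k + 1)) k
  let c : ℕ → ℝ := fun k => S (k + 1) - S k
  have hc : ∀ k, c k = max (T (pick k (S k))) 0 / (k + 1) := fun k => add_sub_cancel_left _ _
  have hc0 : ∀ k, 0 ≤ c k := fun k => by
    rw [hc]; exact div_nonneg (le_max_right _ _) (by positivity)
  have hS : ∀ k, ∑ j ∈ Finset.range k, c j = S k := fun k => by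
    rw [Finset.sum_range_sub]; exact sub_zero _
  refine ⟨orliczOf c, orliczInvOf c, orliczFunction_orliczOf hc0,
    orliczInverse_orliczInvOf hc0, frequently_atTop.2 fun k => ⟨pick k (S k), hpick_ge _ _, ?_⟩⟩
  have hk : (k : ℝ) + 1 ≤ orliczInvOf c (y (pick k (S k))) :=
    (orliczInverse_orliczInvOf hc0).le_of_apply_le (orliczFunction_orliczOf hc0)
      (by positivity) ((orliczOf_natCast_add_one_le hc0 k).trans (hS k ▸ hpick_le k (S k)))
  calc T (pick k (S k)) ≤ c k * (k + 1) := by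
        rw [hc, div_mul_cancel₀ _ (by positivity)]; exact le_max_left _ _
    _ ≤ orliczOf c (2 * (k + 1)) := mul_natCast_add_one_le_orliczOf hc0 k
    _ ≤ orliczOf c (2 * orliczInvOf c (y (pick k (S k)))) :=
        (orliczFunction_orliczOf hc0).strictMonoOn.monotoneOn (mem_Ici.2 (by positivity))
          (mem_Ici.2 (by linarith)) (by linarith)

end

section UnitarilyInvariant

variable {𝕜 E : Type*} [RCLike 𝕜] [NormedAddCommGroup E] [InnerProductSpace 𝕜 E]
  [FiniteDimensional 𝕜 E]

theorem exists_linearIsometryEquiv_apply_eq {x y : E} (hx : ‖x‖ = 1) (hy : ‖y‖ = 1) :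
    ∃ U : E ≃ₗᵢ[𝕜] E, U x = y := by
  have : Nontrivial E := nontrivial_of_ne x 0 (norm_ne_zero_iff.1 (by simp [hx]))
  let i₀ : Fin (Module.finrank 𝕜 E) := ⟨0, Module.finrank_pos⟩
  have hcard : Module.finrank 𝕜 E = Fintype.card (Fin (Module.finrank 𝕜 E)) := by simp
  have horth : ∀ v : E, ‖v‖ = 1 → Orthonormal 𝕜 (({i₀} : Set _).domRestrict fun _ => v) :=
    fun v hv => ⟨fun _ => hv, fun i j hij => absurd (Subsingleton.elim i j) hij⟩
  obtain ⟨bx, hbx⟩ := (horth x hx).exists_orthonormalBasis_extension_of_card_eq hcard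
  obtain ⟨b, hb⟩ := (horth y hy).exists_orthonormalBasis_extension_of_card_eq hcard
  refine ⟨bx.repr.trans b.repr.symm, ?_⟩
  rw [LinearIsometryEquiv.trans_apply, ← hbx i₀ rfl, bx.repr_self, b.repr_symm_single, hb i₀ rfl]

variable [MeasurableSpace E] [BorelSpace E] {σ : Measure E}

-- By invariance all balls of radius `δ` centred on the sphere have the same mass, and finitely
-- many of them cover the sphere, which carries `σ`.
theorem measure_ball_pos_of_map_eq (hσ : σ ≠ 0) (hsph : σ {z | ‖z‖ ≠ 1} = 0)
    (hinv : ∀ U : E ≃ₗᵢ[𝕜] E, σ.map U = σ) {ξ : E} (hξ : ‖ξ‖ = 1) {δ : ℝ} (hδ : 0 < δ) :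
    0 < σ (ball ξ δ) := by
  have hcap : ∀ η : E, ‖η‖ = 1 → σ (ball η δ) = σ (ball ξ δ) := fun η hη => by
    obtain ⟨U, hU⟩ := exists_linearIsometryEquiv_apply_eq (𝕜 := 𝕜) hξ hη
    calc σ (ball η δ) = σ.map U (ball η δ) := by rw [hinv]
      _ = σ (ball ξ δ) := by
        rw [Measure.map_apply U.continuous.measurable measurableSet_ball, U.preimage_ball, ← hU,
          U.symm_apply_apply]
  have : ProperSpace E := FiniteDimensional.proper_rclike 𝕜 E
  refine pos_iff_ne_zero.2 fun h0 => hσ (Measure.measure_univ_eq_zero.1 ?_)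
  obtain ⟨t, hts, htf, hcover⟩ := (isCompact_sphere (0 : E) 1).finite_cover_balls hδ
  have hsub : univ ⊆ (⋃ η ∈ t, ball η δ) ∪ {z | ‖z‖ ≠ 1} := fun z _ => by
    by_cases hz : ‖z‖ = 1
    · exact Or.inl (hcover (mem_sphere_zero_iff_norm.2 hz))
    · exact Or.inr hz
  refine measure_mono_null hsub (measure_union_null
    ((measure_biUnion_null_iff htf.countable).2 fun η hη => ?_) hsph)
  rw [hcap η (mem_sphere_zero_iff_norm.1 (hts hη)), h0]

end UnitarilyInvariant

section Holomorphic

variable {E F : Type*} [NormedAddCommGroup E] [NormedSpace ℂ E] [NormedAddCommGroup F]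
  [NormedSpace ℂ F] {f : E → F}

theorem dist_le_div_mul_dist_of_mapsTo_unitBall (hd : DifferentiableOn ℂ f (ball 0 1))
    (hf : MapsTo f (ball 0 1) (ball 0 1)) {z w : E} (hz : ‖z‖ < 1) (hw : dist w z < 1 - ‖z‖) :
    dist (f w) (f z) ≤ 2 / (1 - ‖z‖) * dist w z := by
  have hsub : ball z (1 - ‖z‖) ⊆ ball 0 1 := ball_subset_ball' (by simp)
  have hfz : ‖f z‖ < 1 := mem_ball_zero_iff.1 (hf (mem_ball_zero_iff.2 hz))
  refine Complex.dist_le_div_mul_dist_of_mapsTo_ball (hd.mono hsub) (fun u hu => ?_) hw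
  have hfu : ‖f u‖ < 1 := mem_ball_zero_iff.1 (hf (hsub hu))
  rw [mem_closedBall, dist_eq_norm]
  linarith [norm_sub_le (f u) (f z)]

end Holomorphic

section Normalize

variable {E : Type*} [NormedAddCommGroup E] [InnerProductSpace ℂ E]

theorem inner_normalize_self (v : E) : inner ℂ (NormedSpace.normalize v) v = ‖v‖ := by
  rw [NormedSpace.normalize, RCLike.real_smul_eq_coe_smul (K := ℂ), inner_smul_left,
    inner_self_eq_norm_sq_to_K, RCLike.conj_ofReal]
  rcases eq_or_ne ‖v‖ 0 with h | h
  · simp [h]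
  · push_cast; field_simp; rfl

theorem norm_one_sub_inner_normalize_le (v w : E) :
    ‖1 - inner ℂ (NormedSpace.normalize v) w‖ ≤ |1 - ‖v‖| + dist w v := by
  have hsplit : 1 - inner ℂ (NormedSpace.normalize v) w
      = ((1 - ‖v‖ : ℝ) : ℂ) + inner ℂ (NormedSpace.normalize v) (v - w) := by
    rw [inner_sub_right, inner_normalize_self]; push_cast; ring
  rw [hsplit, dist_eq_norm, ← norm_sub_rev]
  refine (norm_add_le _ _).trans (add_le_add (by rw [Complex.norm_real, Real.norm_eq_abs]) ?_)
  refine (norm_inner_le_norm _ _).trans (mul_le_of_le_one_left (norm_nonneg _) ?_)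
  rcases eq_or_ne v 0 with rfl | hv
  · simp
  · exact (NormedSpace.norm_normalize hv).le

end Normalize

theorem Filter.Tendsto.one_div_pow_atTop {ι : Type*} {l : Filter ι} {h : ι → ℝ} {N : ℕ}
    (hN : N ≠ 0) (hh : Tendsto h l (𝓝 0)) (hpos : ∀ i, 0 < h i) :
    Tendsto (fun i => 1 / h i ^ N) l atTop := by
  have hpow : Tendsto (fun i => h i ^ N) l (𝓝[>] 0) := tendsto_nhdsWithin_iff.2
    ⟨by simpa [zero_pow hN] using hh.pow N, Eventually.of_forall fun i => pow_pos (hpos i) N⟩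
  simpa only [one_div, Pi.inv_def] using hpow.inv_tendsto_nhdsGT_zero

theorem exists_seq_tendsto_norm_apply_one {E F : Type*} [NormedAddCommGroup E]
    [NormedAddCommGroup F] {φ : E → F} (hφ : MapsTo φ (ball 0 1) (ball 0 1))
    (hsup : ¬∃ r₀ < (1 : ℝ), ∀ z ∈ ball (0 : E) 1, ‖φ z‖ ≤ r₀) :
    ∃ z : ℕ → E, (∀ n, ‖z n‖ < 1 ∧ z n ≠ 0 ∧ φ (z n) ≠ 0) ∧
      Tendsto (fun n => ‖φ (z n)‖) atTop (𝓝 1) := by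
  push Not at hsup
  have hφ0 : ‖φ 0‖ < 1 := mem_ball_zero_iff.1 (hφ (mem_ball_self one_pos))
  -- exceeding `‖φ 0‖` keeps `z n` and `φ (z n)` away from `0`
  choose z hz hφz using fun n : ℕ => hsup (max (1 - 1 / (n + 1)) ‖φ 0‖)
    (max_lt (sub_lt_self 1 (by positivity)) hφ0)
  refine ⟨z, fun n => ⟨mem_ball_zero_iff.1 (hz n), fun h0 => ?_, fun h0 => ?_⟩, ?_⟩
  · exact (hφz n).not_ge (h0 ▸ le_max_right _ _)
  · exact (hφz n).not_ge (by rw [h0, norm_zero]; exact (norm_nonneg _).trans (le_max_right _ _))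
  · refine tendsto_of_tendsto_of_tendsto_of_le_of_le (g := fun n : ℕ => 1 - 1 / ((n : ℝ) + 1))
      ?_ tendsto_const_nhds (fun n => (le_max_left _ _).trans (hφz n).le)
      (fun n => (mem_ball_zero_iff.1 (hφ (hz n))).le)
    simpa using (tendsto_const_nhds (x := (1 : ℝ))).sub tendsto_one_div_add_atTop_nhds_zero_nat

section LevelSet

variable {E : Type*} [NormedAddCommGroup E] [InnerProductSpace ℂ E] {φ : E → E}

theorem norm_one_sub_inner_lt_of_dist_normalize_lt (hd : DifferentiableOn ℂ φ (ball 0 1))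
    (hφ : MapsTo φ (ball 0 1) (ball 0 1)) {z η : E} (hz : ‖z‖ < 1)
    (hη : dist η (NormedSpace.normalize z) < (1 - ‖φ z‖) * (1 - ‖z‖) / 2) :
    ‖1 - inner ℂ (NormedSpace.normalize (φ z)) (φ (‖z‖ • η))‖ < 2 * (1 - ‖φ z‖) := by
  have hφz : ‖φ z‖ < 1 := mem_ball_zero_iff.1 (hφ (mem_ball_zero_iff.2 hz))
  have hrad : 0 < 1 - ‖z‖ := sub_pos.2 hz
  have hdist : dist (‖z‖ • η) z < (1 - ‖φ z‖) * (1 - ‖z‖) / 2 :=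
    calc dist (‖z‖ • η) z = dist (‖z‖ • η) (‖z‖ • NormedSpace.normalize z) := by
          rw [NormedSpace.norm_smul_normalize]
      _ = ‖z‖ * dist η (NormedSpace.normalize z) := by rw [dist_smul₀, norm_norm]
      _ ≤ dist η (NormedSpace.normalize z) := mul_le_of_le_one_left dist_nonneg hz.le
      _ < _ := hη
  have hlip : dist (φ (‖z‖ • η)) (φ z) < 1 - ‖φ z‖ :=
    calc dist (φ (‖z‖ • η)) (φ z) ≤ 2 / (1 - ‖z‖) * dist (‖z‖ • η) z :=
          dist_le_div_mul_dist_of_mapsTo_unitBall hd hφ hz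
            (hdist.trans (by nlinarith [norm_nonneg (φ z)]))
      _ < 2 / (1 - ‖z‖) * ((1 - ‖φ z‖) * (1 - ‖z‖) / 2) := by gcongr
      _ = 1 - ‖φ z‖ := by field_simp
  calc _ ≤ |1 - ‖φ z‖| + dist (φ (‖z‖ • η)) (φ z) := norm_one_sub_inner_normalize_le _ _
    _ < 2 * (1 - ‖φ z‖) := by rw [abs_of_pos (sub_pos.2 hφz)]; linarith

theorem measure_setOf_norm_one_sub_inner_lt_pos [FiniteDimensional ℂ E] [MeasurableSpace E]
    [BorelSpace E] {σ : Measure E} (hσ : σ ≠ 0) (hsph : σ {z | ‖z‖ ≠ 1} = 0)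
    (hinv : ∀ U : E ≃ₗᵢ[ℂ] E, σ.map U = σ) (hd : DifferentiableOn ℂ φ (ball 0 1))
    (hφ : MapsTo φ (ball 0 1) (ball 0 1)) {z : E} (hz : ‖z‖ < 1) (hz0 : z ≠ 0) :
    0 < σ {η | ‖η‖ = 1 ∧
      ‖1 - inner ℂ (NormedSpace.normalize (φ z)) (φ (‖z‖ • η))‖ < 2 * (1 - ‖φ z‖)} := by
  have hφz : ‖φ z‖ < 1 := mem_ball_zero_iff.1 (hφ (mem_ball_zero_iff.2 hz))
  have hδ : 0 < (1 - ‖φ z‖) * (1 - ‖z‖) / 2 := by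
    have := sub_pos.2 hφz; have := sub_pos.2 hz; positivity
  calc 0 < σ (ball (NormedSpace.normalize z) ((1 - ‖φ z‖) * (1 - ‖z‖) / 2)) :=
        measure_ball_pos_of_map_eq hσ hsph hinv (NormedSpace.norm_normalize hz0) hδ
    _ ≤ σ ({η | ‖η‖ = 1 ∧ ‖1 - inner ℂ (NormedSpace.normalize (φ z)) (φ (‖z‖ • η))‖ <
          2 * (1 - ‖φ z‖)} ∪ {z | ‖z‖ ≠ 1}) := by
        refine measure_mono fun η hη => ?_
        by_cases hη1 : ‖η‖ = 1
        · exact Or.inl ⟨hη1, norm_one_sub_inner_lt_of_dist_normalize_lt hd hφ hz hη⟩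
        · exact Or.inr hη1
    _ ≤ _ := (measure_union_le _ _).trans_eq (by rw [hsph, add_zero])

end LevelSet

/-- if `φ : B_N → B_N` is holomorphic and for every Orlicz function `ψ` and
`A > 0` one has `σ_N({η ∈ S_N : |1 − ⟨φ(rη),ζ⟩| < h}) ≤ 1/ψ(A·ψ⁻¹(1/h^N))` for all small
`h`, uniformly in `0 < r < 1` and `ζ ∈ S_N`, then `sup_{B_N} |φ| < 1`.  Here `σ` is the
normalized rotation-invariant measure on the unit sphere, encoded as a unitarily invariant
probability measure carried by the sphere. -/
theorem stmt2 (N : ℕ) (hN : 1 ≤ N)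
    [MeasurableSpace (EuclideanSpace ℂ (Fin N))] [BorelSpace (EuclideanSpace ℂ (Fin N))]
    (φ : EuclideanSpace ℂ (Fin N) → EuclideanSpace ℂ (Fin N))
    (hφd : DifferentiableOn ℂ φ (Metric.ball 0 1))
    (hφm : MapsTo φ (Metric.ball 0 1) (Metric.ball 0 1))
    (σ : Measure (EuclideanSpace ℂ (Fin N))) (hσp : IsProbabilityMeasure σ)
    (hσsph : σ {z : EuclideanSpace ℂ (Fin N) | ‖z‖ ≠ 1} = 0)
    (hσinv : ∀ U : EuclideanSpace ℂ (Fin N) ≃ₗᵢ[ℂ] EuclideanSpace ℂ (Fin N),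
      Measure.map (⇑U) σ = σ)
    (hyp : ∀ ψ ψinv : ℝ → ℝ, OrliczFunction ψ → OrliczInverse ψ ψinv → ∀ A > (0:ℝ),
      ∃ h₀ ∈ Ioo (0:ℝ) 1, ∀ h : ℝ, 0 < h → h < h₀ →
        ∀ r ∈ Ioo (0:ℝ) 1, ∀ ζ : EuclideanSpace ℂ (Fin N), ‖ζ‖ = 1 →
          (σ {η : EuclideanSpace ℂ (Fin N) |
              ‖η‖ = 1 ∧ ‖1 - (inner ℂ ζ (φ (r • η)) : ℂ)‖ < h}).toReal ≤
            1 / ψ (A * ψinv (1 / h ^ N))) :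
    ∃ r₀ < (1:ℝ), ∀ z ∈ Metric.ball (0 : EuclideanSpace ℂ (Fin N)) 1, ‖φ z‖ ≤ r₀ := by
  by_contra hsup
  obtain ⟨z, hz, hφz⟩ := exists_seq_tendsto_norm_apply_one hφm hsup
  set h : ℕ → ℝ := fun n => 2 * (1 - ‖φ (z n)‖)
  have hh_pos : ∀ n, 0 < h n := fun n => by
    linarith [mem_ball_zero_iff.1 (hφm (mem_ball_zero_iff.2 (hz n).1))]
  have hh : Tendsto h atTop (𝓝 0) := by
    simpa using ((tendsto_const_nhds (x := (1 : ℝ))).sub hφz).const_mul 2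
  set m : ℕ → ℝ := fun n => (σ {η | ‖η‖ = 1 ∧
    ‖1 - inner ℂ (NormedSpace.normalize (φ (z n))) (φ (‖z n‖ • η))‖ < h n}).toReal
  have hm : ∀ n, 0 < m n := fun n => ENNReal.toReal_pos (measure_setOf_norm_one_sub_inner_lt_pos
    (IsProbabilityMeasure.ne_zero σ) hσsph hσinv hφd hφm (hz n).1 (hz n).2.1).ne'
    (measure_ne_top _ _)
  -- the targets `2 / m n` force the bound of `hyp` below `m n / 2` along a subsequence
  obtain ⟨ψ, ψinv, hψ, hψinv, hfreq⟩ := exists_orliczFunction_frequently_le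
    (fun n => 1 / h n ^ N) (fun n => 2 / m n) (hh.one_div_pow_atTop (by omega) hh_pos)
  obtain ⟨h₀, hh₀, hbound⟩ := hyp ψ ψinv hψ hψinv 2 two_pos
  obtain ⟨n, hψn, hn⟩ := (hfreq.and_eventually (hh.eventually (gt_mem_nhds hh₀.1))).exists
  have hmn : m n ≤ 1 / ψ (2 * ψinv (1 / h n ^ N)) := hbound (h n) (hh_pos n) hn ‖z n‖
    ⟨norm_pos_iff.2 (hz n).2.1, (hz n).1⟩ _ (NormedSpace.norm_normalize (hz n).2.2)
  have hψm : 1 / ψ (2 * ψinv (1 / h n ^ N)) ≤ m n / 2 := by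
    simpa using one_div_le_one_div_of_le (div_pos two_pos (hm n)) hψn
  linarith [hm n]
end

section
/- Let α > −1 and let φ : 𝔹_N → 𝔹_N be holomorphic. Suppose that for every Orlicz function ψ and every A > 0 there exists h₀ ∈ (0,1) such that v_α(φ⁻¹(S(ζ,h))) ≤ 1/ψ(A·ψ⁻¹(1/h^{N(α)})) for all 0 < h < h₀ and all ζ ∈ 𝕊_N. Then sup_{z ∈ 𝔹_N} |φ(z)| < 1. -/
open Set Filter

open MeasureTheory Set Filter Metric

/-!
If `sup ‖φ‖ = 1`, then for each `n` some value of `φ` lies within `1/(n+1)` of the sphere, so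
`φ⁻¹ S(ζₙ, 1/(n+1))` is a nonempty open subset of the ball and has `v_α`-mass `mₙ > 0`
(the total mass of `(1 - |z|²)^α dv` is finite for `α > -1`). No fixed sequence `mₙ > 0` survives
every Orlicz function: for an increasing `G` dominating `1/mₙ` we build
`ψ x = x² + ∑ⱼ cⱼ (x - j - 1)₊` with coefficients growing so fast that `G (ψ t) ≤ ψ (2t)`.
The hypothesis with this `ψ` and `A = 2` then gives, for large `n`,
`mₙ ≤ 1 / ψ (2 ψ⁻¹ ((n+1)^{N(α)})) ≤ 1 / G ((n+1)^{N(α)}) < mₙ`.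
-/

namespace OrliczFunction

variable {ψ : ℝ → ℝ}

theorem continuousOn (hψ : OrliczFunction ψ) : ContinuousOn ψ (Ici 0) :=
  hψ.1.convexOn.continuousOn_Ici hψ.2.2.2.1

theorem strictMonoOn_s3 (hψ : OrliczFunction ψ) : StrictMonoOn ψ (Ici 0) := by
  obtain ⟨hconv, hnonneg, hzero, -⟩ := hψ
  have hlt : ∀ {c y : ℝ}, 0 < c → c < y → ψ c < ψ y := by
    intro c y hc hcy
    have hslope := hconv.slope_strict_mono_adjacent (self_mem_Ici (a := 0))
      (hc.trans hcy).le hc hcy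
    rw [hzero, sub_zero, sub_zero] at hslope
    have := div_pos_iff_of_pos_right (sub_pos.2 hcy) |>.1
      ((div_nonneg (hnonneg c hc.le) hc.le).trans_lt hslope)
    linarith
  intro x hx y hy hxy
  rcases (mem_Ici.1 hx).eq_or_lt with rfl | hx0
  · calc ψ 0 = 0 := hzero
      _ ≤ ψ (y / 2) := hnonneg _ (by simp only [mem_Ici]; linarith)
      _ < ψ y := hlt (by linarith) (by linarith)
  · exact hlt hx0 hxy

theorem surjOn (hψ : OrliczFunction ψ) : SurjOn ψ (Ici 0) (Ici 0) := by
  intro y hy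
  obtain ⟨X, hX⟩ := (hψ.2.2.2.2.eventually_ge_atTop 1).and (eventually_ge_atTop (max y 1))
    |>.exists
  have hX1 : 1 ≤ X := (le_max_right _ _).trans hX.2
  have hyX : y ≤ ψ X := by
    have := (le_div_iff₀ (by linarith)).1 hX.1
    linarith [le_max_left y 1, hX.2]
  obtain ⟨x, hx, rfl⟩ := intermediate_value_Icc (by linarith)
    (hψ.continuousOn.mono Icc_subset_Ici_self)
    (show y ∈ Icc (ψ 0) (ψ X) from ⟨hψ.2.2.1.symm ▸ hy, hyX⟩)
  exact ⟨x, hx.1, rfl⟩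

theorem exists_orliczInverse (hψ : OrliczFunction ψ) : ∃ ψinv, OrliczInverse ψ ψinv :=
  ⟨Function.invFunOn ψ (Ici 0),
    fun _ hx => hψ.strictMonoOn_s3.injOn.leftInvOn_invFunOn hx,
    fun _ hy => Function.invFunOn_eq (hψ.surjOn hy),
    fun _ hy => Function.invFunOn_mem (hψ.surjOn hy)⟩

end OrliczFunction

theorem convexOn_finset_sum {E ι : Type*} [AddCommMonoid E] [Module ℝ E] {s : Set E}
    (hs : Convex ℝ s) (t : Finset ι) {f : ι → E → ℝ} (hf : ∀ i ∈ t, ConvexOn ℝ s (f i)) :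
    ConvexOn ℝ s fun x => ∑ i ∈ t, f i x := by
  classical
  induction t using Finset.induction_on with
  | empty => simpa using convexOn_const 0 hs
  | insert i t hi ih =>
    simp only [Finset.sum_insert hi]
    exact (hf i (Finset.mem_insert_self i t)).add
      (ih fun j hj => hf j (Finset.mem_insert_of_mem hj))

section FastOrlicz

variable {G : ℝ → ℝ}

/-- The coefficient `orliczCoeff G j` bounds `G` at `t² · orliczMass G j` for every `t ≤ j + 2`,
while `fastOrlicz G t ≤ t² · orliczMass G ⌈t⌉₊`; together they give
`G (fastOrlicz G t) ≤ fastOrlicz G (2 * t)`. -/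
noncomputable def orliczMass (G : ℝ → ℝ) : ℕ → ℝ
  | 0 => 1
  | m + 1 => orliczMass G m + G ((m + 2) ^ 2 * orliczMass G m)

noncomputable def orliczCoeff (G : ℝ → ℝ) (m : ℕ) : ℝ := G ((m + 2) ^ 2 * orliczMass G m)

noncomputable def fastOrliczTrunc (G : ℝ → ℝ) (L : ℕ) (x : ℝ) : ℝ :=
  x ^ 2 + ∑ j ∈ Finset.range L, orliczCoeff G j * max (x - (j + 1)) 0

noncomputable def fastOrlicz (G : ℝ → ℝ) (x : ℝ) : ℝ := fastOrliczTrunc G ⌈x⌉₊ x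

theorem orliczMass_eq (m : ℕ) : orliczMass G m = 1 + ∑ j ∈ Finset.range m, orliczCoeff G j := by
  induction m with
  | zero => simp [orliczMass]
  | succ m ih => rw [Finset.sum_range_succ, ← add_assoc, ← ih]; rfl

theorem fastOrlicz_eq_trunc {x : ℝ} {L : ℕ} (hL : ⌈x⌉₊ ≤ L) :
    fastOrlicz G x = fastOrliczTrunc G L x := by
  refine congrArg (x ^ 2 + ·) (Finset.sum_subset (Finset.range_subset_range.2 hL) ?_)
  intro j _ hj
  have : x ≤ j := (Nat.ceil_le.1 (not_lt.1 (Finset.mem_range.not.1 hj)))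
  rw [max_eq_right (by linarith), mul_zero]

theorem continuous_fastOrliczTrunc (L : ℕ) : Continuous (fastOrliczTrunc G L) := by
  unfold fastOrliczTrunc; fun_prop

theorem sq_le_fastOrliczTrunc (hG : ∀ y, 0 ≤ G y) (L : ℕ) (x : ℝ) :
    x ^ 2 ≤ fastOrliczTrunc G L x :=
  le_add_of_nonneg_right (Finset.sum_nonneg fun _ _ => mul_nonneg (hG _) (le_max_right _ _))

theorem strictConvexOn_fastOrliczTrunc (hG : ∀ y, 0 ≤ G y) (L : ℕ) :
    StrictConvexOn ℝ (Ici 0) (fastOrliczTrunc G L) := by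
  refine (strictConvexOn_pow le_rfl).add_convexOn (convexOn_finset_sum (convex_Ici 0) _ ?_)
  intro j _
  exact (((convexOn_id (convex_Ici 0)).sub (concaveOn_const _ (convex_Ici 0))).sup
      (convexOn_const 0 (convex_Ici 0))).smul (hG _)

theorem strictConvexOn_fastOrlicz (hG : ∀ y, 0 ≤ G y) :
    StrictConvexOn ℝ (Ici 0) (fastOrlicz G) := by
  refine ⟨convex_Ici 0, fun x hx y hy hxy a b ha hb hab => ?_⟩
  have hL : ∀ z ≤ max x y, ⌈z⌉₊ ≤ ⌈max x y⌉₊ := fun _ hz => Nat.ceil_mono hz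
  have hcomb : a • x + b • y ≤ max x y := by
    calc a • x + b • y ≤ a • max x y + b • max x y := by gcongr <;> simp
      _ = max x y := by rw [← add_smul, hab, one_smul]
  rw [fastOrlicz_eq_trunc (hL x (le_max_left x y)), fastOrlicz_eq_trunc (hL y (le_max_right x y)),
    fastOrlicz_eq_trunc (hL _ hcomb)]
  exact (strictConvexOn_fastOrliczTrunc hG _).2 hx hy hxy ha hb hab

theorem orliczFunction_fastOrlicz (hG : ∀ y, 0 ≤ G y) : OrliczFunction (fastOrlicz G) := by
  have hsq : ∀ x, x ^ 2 ≤ fastOrlicz G x := fun x => sq_le_fastOrliczTrunc hG _ x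
  refine ⟨strictConvexOn_fastOrlicz hG, fun x _ => (sq_nonneg x).trans (hsq x),
    by simp [fastOrlicz, fastOrliczTrunc], ?_, ?_⟩
  · have : fastOrlicz G =ᶠ[nhds 0] fastOrliczTrunc G 1 := by
      filter_upwards [Iio_mem_nhds one_pos] with x hx
      exact fastOrlicz_eq_trunc (Nat.ceil_le.2 (by simpa using hx.le))
    exact ((continuous_fastOrliczTrunc 1).continuousAt.congr this.symm).continuousWithinAt
  · refine tendsto_atTop_mono' atTop ?_ tendsto_id
    filter_upwards [eventually_gt_atTop 0] with x hx
    rw [id, le_div_iff₀ hx, ← sq]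
    exact hsq x

theorem fastOrlicz_le_sq_mul_orliczMass (hG : ∀ y, 0 ≤ G y) {t : ℝ} (ht : 1 ≤ t) :
    fastOrlicz G t ≤ t ^ 2 * orliczMass G ⌈t⌉₊ := by
  have hterm : ∀ j ∈ Finset.range ⌈t⌉₊, orliczCoeff G j * max (t - (j + 1)) 0 ≤
      t ^ 2 * orliczCoeff G j := by
    intro j _
    have : max (t - (j + 1)) 0 ≤ t ^ 2 :=
      max_le (by nlinarith [j.cast_nonneg (α := ℝ)]) (by positivity)
    rw [mul_comm (t ^ 2)]
    exact mul_le_mul_of_nonneg_left this (hG _)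
  rw [orliczMass_eq, mul_add, mul_one, Finset.mul_sum]
  exact add_le_add_right (Finset.sum_le_sum hterm) _

theorem orliczCoeff_ceil_le_fastOrlicz_two_mul (hG : ∀ y, 0 ≤ G y) {t : ℝ} (ht : 3 ≤ t) :
    orliczCoeff G ⌈t⌉₊ ≤ fastOrlicz G (2 * t) := by
  have hK : (⌈t⌉₊ : ℝ) < t + 1 := Nat.ceil_lt_add_one (by linarith)
  have hmem : ⌈t⌉₊ ∈ Finset.range ⌈2 * t⌉₊ := Finset.mem_range.2 (Nat.lt_ceil.2 (by linarith))
  have hramp : 1 ≤ max (2 * t - (⌈t⌉₊ + 1)) 0 := le_max_of_le_left (by linarith)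
  calc orliczCoeff G ⌈t⌉₊ ≤ orliczCoeff G ⌈t⌉₊ * max (2 * t - (⌈t⌉₊ + 1)) 0 :=
        le_mul_of_one_le_right (hG _) hramp
    _ ≤ ∑ j ∈ Finset.range ⌈2 * t⌉₊, orliczCoeff G j * max (2 * t - (j + 1)) 0 :=
        Finset.single_le_sum (f := fun j : ℕ => orliczCoeff G j * max (2 * t - (j + 1)) 0)
          (fun j _ => mul_nonneg (hG _) (le_max_right _ _)) hmem
    _ ≤ fastOrlicz G (2 * t) := le_add_of_nonneg_left (sq_nonneg _)

theorem comp_fastOrlicz_le_fastOrlicz_two_mul (hG : ∀ y, 0 ≤ G y) (hGm : Monotone G) {t : ℝ}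
    (ht : 3 ≤ t) : G (fastOrlicz G t) ≤ fastOrlicz G (2 * t) := by
  have htK : t ≤ (⌈t⌉₊ : ℝ) + 2 := (Nat.le_ceil t).trans (by linarith)
  have hS : 0 ≤ orliczMass G ⌈t⌉₊ := by
    rw [orliczMass_eq]; exact add_nonneg zero_le_one (Finset.sum_nonneg fun _ _ => hG _)
  calc G (fastOrlicz G t) ≤ G (t ^ 2 * orliczMass G ⌈t⌉₊) :=
        hGm (fastOrlicz_le_sq_mul_orliczMass hG (by linarith))
    _ ≤ orliczCoeff G ⌈t⌉₊ :=
        hGm (mul_le_mul_of_nonneg_right (pow_le_pow_left₀ (by linarith) htK 2) hS)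
    _ ≤ fastOrlicz G (2 * t) := orliczCoeff_ceil_le_fastOrlicz_two_mul hG ht

end FastOrlicz

theorem exists_monotone_nonneg_gt (a : ℕ → ℝ) : ∃ G : ℝ → ℝ, (∀ y, 0 ≤ G y) ∧ Monotone G ∧
    ∀ (n : ℕ) (y : ℝ), (n : ℝ) ≤ y → a n < G y := by
  have hpos : ∀ j, 0 < |a j| + 1 := fun j => by positivity
  refine ⟨fun y => ∑ j ∈ Finset.range (⌈y⌉₊ + 1), (|a j| + 1),
    fun y => Finset.sum_nonneg fun j _ => (hpos j).le, fun y y' hy => ?_, fun n y hy => ?_⟩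
  · exact Finset.sum_le_sum_of_subset_of_nonneg
      (Finset.range_subset_range.2 (Nat.add_le_add_right (Nat.ceil_mono hy) 1))
      fun j _ _ => (hpos j).le
  · have hn : n ∈ Finset.range (⌈y⌉₊ + 1) :=
      Finset.mem_range.2 (Nat.lt_succ_of_le (Nat.cast_le.1 (hy.trans (Nat.le_ceil y))))
    calc a n < |a n| + 1 := by linarith [le_abs_self (a n)]
      _ ≤ _ := Finset.single_le_sum (f := fun j => |a j| + 1) (fun j _ => (hpos j).le) hn

theorem exists_orlicz_two_mul_inv_gt (a : ℕ → ℝ) : ∃ ψ ψinv : ℝ → ℝ, OrliczFunction ψ ∧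
    OrliczInverse ψ ψinv ∧ ∀ᶠ y in atTop, ∀ n : ℕ, (n : ℝ) ≤ y → a n < ψ (2 * ψinv y) := by
  obtain ⟨G, hG, hGm, haG⟩ := exists_monotone_nonneg_gt a
  have hψ := orliczFunction_fastOrlicz hG
  obtain ⟨ψinv, hinv⟩ := hψ.exists_orliczInverse
  refine ⟨fastOrlicz G, ψinv, hψ, hinv, ?_⟩
  filter_upwards [eventually_ge_atTop (fastOrlicz G 3), eventually_ge_atTop 0] with y hy3 hy0 n hn
  have ht : 3 ≤ ψinv y := by
    by_contra! h
    have := hψ.strictMonoOn_s3 (hinv.2.2 y hy0) (mem_Ici.2 (by norm_num : (0:ℝ) ≤ 3)) h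
    rw [hinv.2.1 y hy0] at this
    linarith
  calc a n < G y := haG n y hn
    _ = G (fastOrlicz G (ψinv y)) := by rw [hinv.2.1 y hy0]
    _ ≤ fastOrlicz G (2 * ψinv y) := comp_fastOrlicz_le_fastOrlicz_two_mul hG hGm ht

theorem exists_orlicz_eventually_lt {m : ℕ → ℝ} (hm : ∀ n, 0 < m n) {p : ℝ} (hp : 1 ≤ p) :
    ∃ ψ ψinv : ℝ → ℝ, OrliczFunction ψ ∧ OrliczInverse ψ ψinv ∧
      ∀ᶠ n : ℕ in atTop, 1 / ψ (2 * ψinv (1 / (1 / ((n : ℝ) + 1)) ^ p)) < m n := by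
  obtain ⟨ψ, ψinv, hψ, hψinv, hgrowth⟩ := exists_orlicz_two_mul_inv_gt fun n => 1 / m n
  have hscale : Tendsto (fun n : ℕ => ((n : ℝ) + 1) ^ p) atTop atTop :=
    (tendsto_rpow_atTop (by linarith)).comp
      (tendsto_atTop_add_const_right _ 1 tendsto_natCast_atTop_atTop)
  refine ⟨ψ, ψinv, hψ, hψinv, (hscale.eventually hgrowth).mono fun n hn => ?_⟩
  rw [Real.div_rpow zero_le_one (by positivity), Real.one_rpow, one_div_one_div]
  have hlt := hn n ((le_add_of_nonneg_right zero_le_one).trans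
    (Real.self_le_rpow_of_one_le (by linarith [n.cast_nonneg (α := ℝ)]) hp))
  simpa using one_div_lt_one_div_of_lt (one_div_pos.2 (hm n)) hlt

theorem integrableOn_pow_smul_one_sub_sq_rpow {α : ℝ} (hα : -1 < α) (d : ℕ) :
    IntegrableOn (fun y : ℝ => y ^ d • (1 - y ^ 2) ^ α) (Ioo 0 1) := by
  have hsing : IntegrableOn (fun y : ℝ => (1 - y) ^ α) (Ioo 0 1) := by
    have := (intervalIntegral.intervalIntegrable_rpow' hα (a := 1) (b := 0)).comp_sub_left 1
    simp only [sub_self, sub_zero] at this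
    exact this.1.mono_set Ioo_subset_Ioc_self
  have hcont : ContinuousOn (fun y : ℝ => y ^ d * (1 + y) ^ α) (Icc 0 1) := by
    refine (continuousOn_pow d).mul (ContinuousOn.rpow_const (by fun_prop) fun y hy => ?_)
    exact Or.inl (by linarith [hy.1])
  refine (IntegrableOn.continuousOn_mul_of_subset hcont hsing isCompact_Icc measurableSet_Ioo
    Ioo_subset_Icc_self).congr_fun (fun y hy => ?_) measurableSet_Ioo
  dsimp only
  rw [smul_eq_mul, mul_assoc, ← Real.mul_rpow (by linarith [hy.1]) (by linarith [hy.2])]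
  ring_nf

section Bergman

variable (N : ℕ) [MeasurableSpace (EuclideanSpace ℂ (Fin N))]
  [BorelSpace (EuclideanSpace ℂ (Fin N))]

theorem wBergman_univ_lt_top (hN : 1 ≤ N) {α : ℝ} (hα : -1 < α) : wBergman N α univ < ⊤ := by
  have : NeZero N := ⟨by omega⟩
  have hint : IntegrableOn (fun z : EuclideanSpace ℂ (Fin N) => (1 - ‖z‖ ^ 2) ^ α) (ball 0 1) :=
    (integrableOn_fun_norm_addHaar volume (f := fun y => (1 - y ^ 2) ^ α)).2
      (integrableOn_pow_smul_one_sub_sq_rpow hα _)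
  rw [wBergman, withDensity_apply _ MeasurableSet.univ, Measure.restrict_univ]
  exact hint.lintegral_lt_top

theorem wBergman_pos_of_isOpen (α : ℝ) {V : Set (EuclideanSpace ℂ (Fin N))} (hV : IsOpen V)
    (hsub : V ⊆ ball 0 1) (hne : V.Nonempty) : 0 < wBergman N α V := by
  rw [pos_iff_ne_zero, wBergman, Ne, withDensity_apply_eq_zero' (by fun_prop)]
  have hdens : {z | ENNReal.ofReal ((1 - ‖z‖ ^ 2) ^ α) ≠ 0} ∩ V = V := by
    refine inter_eq_right.2 fun z hz => ?_
    have hz1 : ‖z‖ < 1 := mem_ball_zero_iff.1 (hsub hz)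
    have : 0 < 1 - ‖z‖ ^ 2 := by nlinarith [norm_nonneg z]
    exact (ENNReal.ofReal_pos.2 (Real.rpow_pos_of_pos this α)).ne'
  rw [hdens, Measure.restrict_eq_self _ hsub]
  exact (hV.measure_pos volume hne).ne'

theorem vBergman_toReal_pos (hN : 1 ≤ N) {α : ℝ} (hα : -1 < α)
    {s : Set (EuclideanSpace ℂ (Fin N))} (hs : 0 < wBergman N α s) :
    0 < (vBergman N α s).toReal := by
  have hfin := wBergman_univ_lt_top N hN hα
  have hball := wBergman_pos_of_isOpen N α isOpen_ball subset_rfl ⟨0, mem_ball_self one_pos⟩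
  rw [vBergman, Measure.smul_apply, smul_eq_mul]
  exact ENNReal.toReal_pos (ENNReal.mul_pos (ENNReal.inv_ne_zero.2 hfin.ne) hs.ne').ne'
    (ENNReal.mul_ne_top (ENNReal.inv_ne_top.2 (hball.trans_le (measure_mono (subset_univ _))).ne')
      ((measure_mono (subset_univ _)).trans_lt hfin).ne)

end Bergman

theorem isOpen_nonisotropicBall (N : ℕ) (ζ : EuclideanSpace ℂ (Fin N)) (h : ℝ) :
    IsOpen (nonisotropicBall N ζ h) :=
  (isOpen_lt continuous_norm continuous_const).inter
    (isOpen_lt (continuous_const.sub (continuous_const.inner continuous_id)).norm continuous_const)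

theorem mem_nonisotropicBall_normalize {N : ℕ} {v : EuclideanSpace ℂ (Fin N)} (hv : ‖v‖ < 1)
    {h : ℝ} (hh : 1 - ‖v‖ < h) : v ∈ nonisotropicBall N ((‖v‖ : ℂ)⁻¹ • v) h := by
  refine ⟨hv, ?_⟩
  rcases eq_or_ne v 0 with rfl | hv0
  · simpa using hh
  have hinner : (inner ℂ ((‖v‖ : ℂ)⁻¹ • v) v : ℂ) = ‖v‖ := by
    simp [inner_self_eq_norm_sq_to_K, sq, hv0]
  rw [hinner, ← Complex.ofReal_one, ← Complex.ofReal_sub, Complex.norm_real, Real.norm_eq_abs,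
    abs_of_pos (by linarith)]
  exact hh

theorem exists_vBergman_preimage_nonisotropicBall_pos (N : ℕ) (hN : 1 ≤ N)
    [MeasurableSpace (EuclideanSpace ℂ (Fin N))] [BorelSpace (EuclideanSpace ℂ (Fin N))]
    {α : ℝ} (hα : -1 < α) {φ : EuclideanSpace ℂ (Fin N) → EuclideanSpace ℂ (Fin N)}
    (hφc : ContinuousOn φ (ball 0 1)) (hφm : MapsTo φ (ball 0 1) (ball 0 1))
    {z : EuclideanSpace ℂ (Fin N)} (hz : z ∈ ball 0 1) {h : ℝ} (h1 : h ≤ 1)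
    (hh : 1 - h < ‖φ z‖) :
    ∃ ζ : EuclideanSpace ℂ (Fin N), ‖ζ‖ = 1 ∧
      0 < (vBergman N α (φ ⁻¹' nonisotropicBall N ζ h)).toReal := by
  have hφz : φ z ≠ 0 := norm_pos_iff.1 (by linarith)
  refine ⟨_, norm_smul_inv_norm (𝕜 := ℂ) hφz, vBergman_toReal_pos N hN hα ?_⟩
  have hmem : z ∈ ball 0 1 ∩ φ ⁻¹' nonisotropicBall N ((‖φ z‖ : ℂ)⁻¹ • φ z) h :=
    ⟨hz, mem_nonisotropicBall_normalize (mem_ball_zero_iff.1 (hφm hz)) (by linarith)⟩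
  exact (wBergman_pos_of_isOpen N α (hφc.isOpen_inter_preimage isOpen_ball
    (isOpen_nonisotropicBall N _ h)) inter_subset_left ⟨z, hmem⟩).trans_le
    (measure_mono inter_subset_right)

/-- if `φ : B_N → B_N` is holomorphic, `α > −1`, and for every Orlicz function
`ψ` and `A > 0` one has `v_α(φ⁻¹(S(ζ,h))) ≤ 1/ψ(A·ψ⁻¹(1/h^{N+α+1}))` for all small `h`,
uniformly in `ζ ∈ S_N`, then `sup_{B_N} |φ| < 1`. -/
theorem stmt3 (N : ℕ) (hN : 1 ≤ N)
    [MeasurableSpace (EuclideanSpace ℂ (Fin N))] [BorelSpace (EuclideanSpace ℂ (Fin N))]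
    (α : ℝ) (hα : -1 < α)
    (φ : EuclideanSpace ℂ (Fin N) → EuclideanSpace ℂ (Fin N))
    (hφd : DifferentiableOn ℂ φ (Metric.ball 0 1))
    (hφm : MapsTo φ (Metric.ball 0 1) (Metric.ball 0 1))
    (hyp : ∀ ψ ψinv : ℝ → ℝ, OrliczFunction ψ → OrliczInverse ψ ψinv → ∀ A > (0:ℝ),
      ∃ h₀ ∈ Ioo (0:ℝ) 1, ∀ h : ℝ, 0 < h → h < h₀ →
        ∀ ζ : EuclideanSpace ℂ (Fin N), ‖ζ‖ = 1 →
          (vBergman N α (φ ⁻¹' nonisotropicBall N ζ h)).toReal ≤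
            1 / ψ (A * ψinv (1 / h ^ ((N : ℝ) + α + 1)))) :
    ∃ r₀ < (1:ℝ), ∀ z ∈ Metric.ball (0 : EuclideanSpace ℂ (Fin N)) 1, ‖φ z‖ ≤ r₀ := by
  by_contra! hsup
  have hsel (n : ℕ) : ∃ ζ : EuclideanSpace ℂ (Fin N), ‖ζ‖ = 1 ∧
      0 < (vBergman N α (φ ⁻¹' nonisotropicBall N ζ (1 / (n + 1)))).toReal := by
    obtain ⟨z, hz, hφz⟩ := hsup (1 - 1 / (n + 1)) (sub_lt_self _ (by positivity))
    exact exists_vBergman_preimage_nonisotropicBall_pos N hN hα hφd.continuousOn hφm hz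
      (div_le_one_of_le₀ (by linarith [n.cast_nonneg (α := ℝ)]) (by positivity)) (by linarith)
  choose ζ hζ hpos using hsel
  have hp : 1 ≤ (N : ℝ) + α + 1 := by
    have : (1 : ℝ) ≤ N := by exact_mod_cast hN
    linarith
  obtain ⟨ψ, ψinv, hψ, hψinv, hlarge⟩ := exists_orlicz_eventually_lt hpos hp
  obtain ⟨h₀, ⟨hh₀, -⟩, hsmall⟩ := hyp ψ ψinv hψ hψinv 2 two_pos
  obtain ⟨n, hn, hn₀⟩ := (hlarge.and
    (tendsto_one_div_add_atTop_nhds_zero_nat.eventually (gt_mem_nhds hh₀))).exists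
  linarith [hsmall _ (by positivity) hn₀ (ζ n) (hζ n)]
end
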